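/- Let b ∈ B and p₁ ≤_B p₂ ≤_B p₃. Suppose q₁ has b-transitions to p₁, p₂, p₃ and q₂ has b-transitions to p₁ and p₃, with q₁ and q₂ otherwise identical (same remaining transitions and termination options). Then q₁ ≃_B q₂; i.e., for bisimulated actions, the middle brother p₂ may be removed provided both the littlest brother p₁ and biggest brother p₃ are kept. -/

import Mathlib

variable {S A : Type*}

/-- R is a partial bisimulation w.r.t. the bisimulation action set B. -/
def IsPB (tm : S → Prop) (tr : S → A → S → Prop) (B : Set A)
    (R : S → S → Prop) : Prop :=
  ∀ p q, R p q →
    (tm p → tm q) ∧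
    (∀ a p', tr p a p' → ∃ q', tr q a q' ∧ R p' q') ∧
    (∀ b q', b ∈ B → tr q b q' → ∃ p', tr p b p' ∧ R p' q')

/-- The partial bisimilarity preorder ≤_B. -/
def PbLe (tm : S → Prop) (tr : S → A → S → Prop) (B : Set A) (p q : S) : Prop :=
  ∃ R, IsPB tm tr B R ∧ R p q

/-- R is a simulation. -/
def IsSim (tm : S → Prop) (tr : S → A → S → Prop) (R : S → S → Prop) : Prop :=
  ∀ p q, R p q →
    (tm p → tm q) ∧
    (∀ a p', tr p a p' → ∃ q', tr q a q' ∧ R p' q')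

/-- Strong similarity preorder. -/
def SimLe (tm : S → Prop) (tr : S → A → S → Prop) (p q : S) : Prop :=
  ∃ R, IsSim tm tr R ∧ R p q

/-- R is a bisimulation: R and its inverse are simulations. -/
def IsBisim (tm : S → Prop) (tr : S → A → S → Prop) (R : S → S → Prop) : Prop :=
  IsSim tm tr R ∧ IsSim tm tr (fun p q => R q p)

/-- Strong bisimilarity. -/
def Bisimilar (tm : S → Prop) (tr : S → A → S → Prop) (p q : S) : Prop :=
  ∃ R, IsBisim tm tr R ∧ R p q

/-- A strong bisimulation: a symmetric relation matching termination and transitions. -/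
def IsStrongBisim (tm : S → Prop) (tr : S → A → S → Prop) (R : S → S → Prop) : Prop :=
  Symmetric R ∧ ∀ p q, R p q →
    (tm p ↔ tm q) ∧
    (∀ a p', tr p a p' → ∃ q', tr q a q' ∧ R p' q')

/-- P is a partition of S: nonempty, covering, pairwise-disjoint classes. -/
def IsPartition' (P : Set (Set S)) : Prop :=
  (∀ Q ∈ P, Q.Nonempty) ∧ (∀ s : S, ∃ Q ∈ P, s ∈ Q) ∧
  (∀ Q ∈ P, ∀ R ∈ P, (Q ∩ R).Nonempty → Q = R)

/-- Partition-relation pair: a partition with a partial order on its classes. -/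
def IsPRP (P : Set (Set S)) (le : Set S → Set S → Prop) : Prop :=
  IsPartition' P ∧
  (∀ Q R, le Q R → Q ∈ P ∧ R ∈ P) ∧
  (∀ Q ∈ P, le Q Q) ∧
  (∀ Q R, le Q R → le R Q → Q = R) ∧
  (∀ Q R T, le Q R → le R T → le Q T)

/-- Every state of P has an a-transition into X. -/
def AllTr (tr : S → A → S → Prop) (a : A) (P X : Set S) : Prop :=
  ∀ p ∈ P, ∃ x ∈ X, tr p a x

/-- Some state of P has an a-transition into X. -/
def ExTr (tr : S → A → S → Prop) (a : A) (P X : Set S) : Prop :=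
  ∃ p ∈ P, ∃ x ∈ X, tr p a x

/-- bb(R): union of all big brother classes of R. -/
def bigBro (P : Set (Set S)) (le : Set S → Set S → Prop) (R : Set S) : Set S :=
  {x | ∃ Q ∈ P, le R Q ∧ x ∈ Q}

/-- lb(R): union of all little brother classes of R. -/
def litBro (P : Set (Set S)) (le : Set S → Set S → Prop) (R : Set S) : Set S :=
  {x | ∃ Q ∈ P, le Q R ∧ x ∈ Q}

/-- Stability of a partition-relation pair (Definition of stability conditions a-d). -/
def IsStable (tm : S → Prop) (tr : S → A → S → Prop) (B : Set A)
    (P : Set (Set S)) (le : Set S → Set S → Prop) : Prop :=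
  (∀ Q ∈ P, (∀ q ∈ Q, tm q) ∨ (∀ q ∈ Q, ¬ tm q)) ∧
  (∀ Q R, le Q R → (∀ q ∈ Q, tm q) → (∀ r ∈ R, tm r)) ∧
  (∀ Q Q' R, R ∈ P → le Q Q' → ∀ a, ExTr tr a Q R → AllTr tr a Q' (bigBro P le R)) ∧
  (∀ Q Q' R, R ∈ P → le Q Q' → ∀ b ∈ B, ExTr tr b Q' R → AllTr tr b Q (litBro P le R))

/-- The order ◁ on partition-relation pairs. -/
def Lhd (P₁ : Set (Set S)) (le₁ : Set S → Set S → Prop)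
    (P₂ : Set (Set S)) (le₂ : Set S → Set S → Prop) : Prop :=
  ∀ Q R, le₁ Q R → ∃ Q' ∈ P₂, ∃ R' ∈ P₂, Q ⊆ Q' ∧ R ⊆ R' ∧ le₂ Q' R'

/-- The relation on states induced by a partition-relation pair. -/
def IndRel (P : Set (Set S)) (le : Set S → Set S → Prop) (p q : S) : Prop :=
  ∃ Q ∈ P, ∃ R ∈ P, le Q R ∧ p ∈ Q ∧ q ∈ R

/-- Equivalence classes of the equivalence kernel R ∩ R⁻¹ of a preorder R. -/
def eqClasses (R : S → S → Prop) : Set (Set S) :=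
  {C | ∃ p, C = {q | R p q ∧ R q p}}

/-- The class order induced by a preorder R on its equivalence classes. -/
def classLe (R : S → S → Prop) (Q T : Set S) : Prop :=
  Q ∈ eqClasses R ∧ T ∈ eqClasses R ∧ ∃ p ∈ Q, ∃ q ∈ T, R p q

/-- The little brother relation ≤' induced on a parent partition P'. -/
def IndLe (le : Set S → Set S → Prop) (P' : Set (Set S)) (Q' R' : Set S) : Prop :=
  Q' ∈ P' ∧ R' ∈ P' ∧ ∃ Q R, le Q R ∧ Q ⊆ Q' ∧ R ⊆ R'

/-- bb'(R') with respect to a parent partition. -/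
def bigBro' (le : Set S → Set S → Prop) (P' : Set (Set S)) (R' : Set S) : Set S :=
  {x | ∃ Q' ∈ P', IndLe le P' R' Q' ∧ x ∈ Q'}

/-- lb'(R') with respect to a parent partition. -/
def litBro' (le : Set S → Set S → Prop) (P' : Set (Set S)) (R' : Set S) : Set S :=
  {x | ∃ Q' ∈ P', IndLe le P' Q' R' ∧ x ∈ Q'}

/-- Stability conditions 1-4 of (P, le) with respect to a parent partition P'. -/
def StableWrt (tm : S → Prop) (tr : S → A → S → Prop) (B : Set A)
    (P : Set (Set S)) (le : Set S → Set S → Prop) (P' : Set (Set S)) : Prop :=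
  (∀ Q ∈ P, ∀ a, ∀ R' ∈ P', ExTr tr a Q R' → AllTr tr a Q (bigBro' le P' R')) ∧
  (∀ Q ∈ P, ∀ b ∈ B, ∀ R' ∈ P', ExTr tr b Q R' → AllTr tr b Q (litBro' le P' R')) ∧
  (∀ Q T, le Q T → ∀ a, ∀ R' ∈ P', AllTr tr a Q R' → AllTr tr a T (bigBro' le P' R')) ∧
  (∀ Q T, le Q T → ∀ b ∈ B, ∀ R' ∈ P', AllTr tr b T R' → AllTr tr b Q (litBro' le P' R'))

/-- P' is a parent partition of P. -/
def IsParent (P P' : Set (Set S)) : Prop :=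
  IsPartition' P' ∧ ∀ Q ∈ P, ∃ Q' ∈ P', Q ⊆ Q'

/-- The partition obtained by splitting the class P₀ of P' into S' and P₀ \ S'. -/
def splitPart (P' : Set (Set S)) (P₀ Sp : Set S) : Set (Set S) :=
  (P' \ {P₀}) ∪ {Sp, P₀ \ Sp}

/-- Some le-related pair of classes lies inside (X, Y). -/
def relBetween (le : Set S → Set S → Prop) (X Y : Set S) : Prop :=
  ∃ Q R, le Q R ∧ Q ⊆ X ∧ R ⊆ Y

/-- Sp is a splitter of the class P₀ of the parent partition P' with respect to P. -/
def IsSplitter (P : Set (Set S)) (le : Set S → Set S → Prop)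
    (P' : Set (Set S)) (P₀ Sp : Set S) : Prop :=
  P₀ ∈ P' ∧ Sp ⊆ P₀ ∧ Sp.Nonempty ∧ (P₀ \ Sp).Nonempty ∧
  (∀ Q ∈ P, Q ⊆ Sp ∨ Q ∩ Sp = ∅) ∧
  (relBetween le Sp (P₀ \ Sp) ∨
    (¬ relBetween le Sp (P₀ \ Sp) ∧ ¬ relBetween le (P₀ \ Sp) Sp))

/-- (Pr, ler) is the result Refine(P, le, P', Sp): the ◁-coarsest pair ◁-below (P, le)
stable with respect to the split parent partition. -/
def IsRefineOf (tm : S → Prop) (tr : S → A → S → Prop) (B : Set A)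
    (P : Set (Set S)) (le : Set S → Set S → Prop)
    (P' : Set (Set S)) (P₀ Sp : Set S)
    (Pr : Set (Set S)) (ler : Set S → Set S → Prop) : Prop :=
  IsPRP Pr ler ∧ Lhd Pr ler P le ∧
  StableWrt tm tr B Pr ler (splitPart P' P₀ Sp) ∧
  ∀ Q lq, IsPRP Q lq → Lhd Q lq P le →
    StableWrt tm tr B Q lq (splitPart P' P₀ Sp) → Lhd Q lq Pr ler

/-!
For `q₁ ≤_B q₂`, the only transition of `q₁` that `q₂` lacks is `q₁ -b→ p₂`, and it is answered
by `q₂ -b→ p₃` because `p₂ ≤_B p₃`. For `q₂ ≤_B q₁`, `q₂` may have to answer that transition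
backwards, and does so by `q₂ -b→ p₁` because `p₁ ≤_B p₂`. Every other transition is answered
by itself, using reflexivity of `≤_B`.
-/

section

variable {tm : S → Prop} {tr : S → A → S → Prop} {B : Set A}

lemma pbLe_refl (p : S) : PbLe tm tr B p p := by
  refine ⟨Eq, ?_, rfl⟩
  rintro x _ rfl
  exact ⟨id, fun a x' h => ⟨x', h, rfl⟩, fun c y' _ h => ⟨y', h, rfl⟩⟩

lemma isPB_pbLe : IsPB tm tr B (PbLe tm tr B) := by
  rintro p q ⟨R, hR, hpq⟩
  obtain ⟨htm, hfwd, hbwd⟩ := hR p q hpq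
  exact ⟨htm, fun a p' h => (hfwd a p' h).imp fun _ ⟨hq', hR'⟩ => ⟨hq', R, hR, hR'⟩,
    fun c q' hc h => (hbwd c q' hc h).imp fun _ ⟨hp', hR'⟩ => ⟨hp', R, hR, hR'⟩⟩

/-- Coinduction up to `≤_B`: `≤_B ∪ {(p, q)}` is a partial bisimulation. -/
lemma pbLe_of_transfer {p q : S} (htm : tm p → tm q)
    (hfwd : ∀ a p', tr p a p' → ∃ q', tr q a q' ∧ PbLe tm tr B p' q')
    (hbwd : ∀ c q', c ∈ B → tr q c q' → ∃ p', tr p c p' ∧ PbLe tm tr B p' q') :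
    PbLe tm tr B p q := by
  refine ⟨fun x y => PbLe tm tr B x y ∨ (x = p ∧ y = q), ?_, Or.inr ⟨rfl, rfl⟩⟩
  intro x y hxy
  obtain ⟨htm', hfwd', hbwd'⟩ :=
    hxy.elim (isPB_pbLe x y) fun ⟨hx, hy⟩ => hx ▸ hy ▸ ⟨htm, hfwd, hbwd⟩
  exact ⟨htm', fun a x' h => (hfwd' a x' h).imp fun _ => And.imp_right Or.inl,
    fun c y' hc h => (hbwd' c y' hc h).imp fun _ => And.imp_right Or.inl⟩

end

theorem little_brother_bisim_general (tm : S → Prop) (tr : S → A → S → Prop) (B : Set A)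
    (b : A) (p₁ p₂ p₃ q₁ q₂ : S)
    (h12 : PbLe tm tr B p₁ p₂) (h23 : PbLe tm tr B p₂ p₃)
    (hq2p1 : tr q₂ b p₁) (hq2p3 : tr q₂ b p₃)
    (htm : tm q₁ ↔ tm q₂)
    (htr : ∀ c r, tr q₂ c r ↔ (tr q₁ c r ∧ ¬ (c = b ∧ r = p₂))) :
    PbLe tm tr B q₁ q₂ ∧ PbLe tm tr B q₂ q₁ := by
  have tr_of_tr₂ : ∀ c r, tr q₂ c r → tr q₁ c r := fun c r h => ((htr c r).1 h).1
  have tr₂_of_tr : ∀ c r, tr q₁ c r → (c = b ∧ r = p₂) ∨ tr q₂ c r := fun c r h =>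
    (em (c = b ∧ r = p₂)).imp_right fun hne => (htr c r).2 ⟨h, hne⟩
  constructor
  · refine pbLe_of_transfer htm.mp (fun a p' h => ?_)
      (fun c q' _ h => ⟨q', tr_of_tr₂ c q' h, pbLe_refl q'⟩)
    rcases tr₂_of_tr a p' h with ⟨rfl, rfl⟩ | h
    · exact ⟨p₃, hq2p3, h23⟩
    · exact ⟨p', h, pbLe_refl p'⟩
  · refine pbLe_of_transfer htm.mpr (fun a p' h => ⟨p', tr_of_tr₂ a p' h, pbLe_refl p'⟩)
      (fun c q' _ h => ?_)
    rcases tr₂_of_tr c q' h with ⟨rfl, rfl⟩ | h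
    · exact ⟨p₁, hq2p1, h12⟩
    · exact ⟨q', h, pbLe_refl q'⟩

/-- for a bisimulated action b ∈ B, the middle brother p₂ of
p₁ ≤_B p₂ ≤_B p₃ may be removed provided p₁ and p₃ are kept. -/
theorem little_brother_bisim (tm : S → Prop) (tr : S → A → S → Prop) (B : Set A)
    (b : A) (p₁ p₂ p₃ q₁ q₂ : S)
    (hb : b ∈ B)
    (h12 : PbLe tm tr B p₁ p₂) (h23 : PbLe tm tr B p₂ p₃)
    (hq1p1 : tr q₁ b p₁) (hq1p2 : tr q₁ b p₂) (hq1p3 : tr q₁ b p₃)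
    (hq2p1 : tr q₂ b p₁) (hq2p3 : tr q₂ b p₃)
    (htm : tm q₁ ↔ tm q₂)
    (htr : ∀ c r, tr q₂ c r ↔ (tr q₁ c r ∧ ¬ (c = b ∧ r = p₂))) :
    PbLe tm tr B q₁ q₂ ∧ PbLe tm tr B q₂ q₁ :=
  little_brother_bisim_general tm tr B b p₁ p₂ p₃ q₁ q₂ h12 h23 hq2p1 hq2p3 htm htr
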